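/- Let 0 ≤ q < 1 and p ≥ max{q, (1+q)/3}. Then A_p(x,y) ≥ St_q(x,y) for all x,y > 0, where A_p is the power mean and St_q is the Stolarsky mean St_q(x,y) = ((x^q − y^q)/(q(x−y)))^{1/(q−1)} for q ≠ 0, x ≠ y, and St_0 = L the logarithmic mean. -/

import Mathlib

/-- The power mean of order `p > 0`. -/
noncomputable def powerMean (p x y : ℝ) : ℝ := ((x ^ p + y ^ p) / 2) ^ (1 / p)

/-- The Stolarsky mean `St_q`, with `St_0 = L` the logarithmic mean. -/
noncomputable def stolarskyMean (q x y : ℝ) : ℝ :=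
  if x = y then x
  else if q = 0 then (x - y) / (Real.log x - Real.log y)
  else ((x ^ q - y ^ q) / (q * (x - y))) ^ (1 / (q - 1))

/-! Write `x = exp (c + a)`, `y = exp (c - a)` with `a > 0`, and `ψ u = log (sinh u / u)`
(`logSinhc`). Then `log St_q = c + a · slope ψ (a q) a` and
`log A_p = c + log (cosh (a p)) / p = c + a · slope ψ (a p) (2 a p)`.
Since `ψ` is convex and `3p - q ≥ 1`, the first slope is at most `slope ψ (a q) (a (3p - q))`.
That interval has the same midpoint as `[a p, 2 a p]` and contains it because `p ≥ q`. Finally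
`ψ'` (the Langevin function `coth u - 1/u`) is concave, which amounts to Lazarević's inequality
`u³ cosh u ≤ sinh³ u`, and for such `ψ` slopes over concentric intervals shrink as the intervals
widen. -/

open Real Set

lemma monotoneOn_Ici_of_hasDerivAt_nonneg {f f' : ℝ → ℝ} {a : ℝ} (hf : ContinuousOn f (Ici a))
    (hf' : ∀ x, a < x → HasDerivAt f (f' x) x) (hf'₀ : ∀ x, a < x → 0 ≤ f' x) :
    MonotoneOn f (Ici a) :=
  monotoneOn_of_hasDerivWithinAt_nonneg (convex_Ici a) hf
    (fun x hx ↦ (hf' x (by simpa using hx)).hasDerivWithinAt)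
    (fun x hx ↦ hf'₀ x (by simpa using hx))

namespace Real

lemma sinh_le_mul_cosh {u : ℝ} (hu : 0 ≤ u) : sinh u ≤ u * cosh u := by
  have hmono : MonotoneOn (fun u ↦ u * cosh u - sinh u) (Ici 0) :=
    monotoneOn_Ici_of_hasDerivAt_nonneg (f' := fun u ↦ u * sinh u) (by fun_prop)
      (fun x _ ↦ (((hasDerivAt_id' x).mul (hasDerivAt_cosh x)).sub (hasDerivAt_sinh x)).congr_deriv
        (by ring))
      (fun x hx ↦ mul_nonneg hx.le (sinh_nonneg_iff.2 hx.le))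
  simpa using hmono self_mem_Ici hu hu

lemma three_mul_sinh_mul_cosh_le {u : ℝ} (hu : 0 ≤ u) :
    3 * sinh u * cosh u ≤ u * (2 * cosh u ^ 2 + 1) := by
  have hmono : MonotoneOn (fun u ↦ u * (2 * cosh u ^ 2 + 1) - 3 * sinh u * cosh u) (Ici 0) :=
    monotoneOn_Ici_of_hasDerivAt_nonneg (f' := fun u ↦ 4 * sinh u * (u * cosh u - sinh u))
      (by fun_prop)
      (fun x _ ↦ (((hasDerivAt_id' x).mul
        ((((hasDerivAt_cosh x).pow 2).const_mul 2).add_const 1)).sub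
          (((hasDerivAt_sinh x).const_mul 3).mul (hasDerivAt_cosh x))).congr_deriv
        (by simp only [Pi.pow_apply]; linear_combination (-1) * cosh_sq_sub_sinh_sq x))
      (fun x hx ↦ mul_nonneg (mul_nonneg zero_le_four (sinh_nonneg_iff.2 hx.le))
        (sub_nonneg.2 (sinh_le_mul_cosh hx.le)))
  simpa using hmono self_mem_Ici hu hu

lemma sinh_div_self_pos {u : ℝ} (hu : u ≠ 0) : 0 < sinh u / u := by
  rcases hu.lt_or_gt with hu | hu
  · exact div_pos_of_neg_of_neg (sinh_neg_iff.2 hu) hu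
  · exact div_pos (sinh_pos_iff.2 hu) hu

end Real

lemma ConcaveOn.add_le_add_of_add_eq {𝕜 : Type*} [Field 𝕜] [LinearOrder 𝕜] [IsStrictOrderedRing 𝕜]
    {s : Set 𝕜} {g : 𝕜 → 𝕜} (hg : ConcaveOn 𝕜 s g) {a b a' b' : 𝕜} (ha : a ∈ s) (hb : b ∈ s)
    (haa' : a ≤ a') (ha'b : a' ≤ b) (hsum : a' + b' = a + b) : g a + g b ≤ g a' + g b' := by
  obtain rfl : b' = a + b - a' := by linear_combination hsum
  rcases (haa'.trans ha'b).eq_or_lt with rfl | hab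
  · obtain rfl : a' = a := le_antisymm ha'b haa'
    ring_nf; rfl
  have hba : 0 < b - a := sub_pos.2 hab
  have hl : 0 ≤ (b - a') / (b - a) := div_nonneg (by linarith) hba.le
  have hm : 0 ≤ (a' - a) / (b - a) := div_nonneg (by linarith) hba.le
  have hlm : (b - a') / (b - a) + (a' - a) / (b - a) = 1 := by field_simp; ring
  have h₁ := hg.2 ha hb hl hm hlm
  have h₂ := hg.2 ha hb hm hl (by rw [add_comm, hlm])
  have e₁ : (b - a') / (b - a) * a + (a' - a) / (b - a) * b = a' := by field_simp; ring
  have e₂ : (a' - a) / (b - a) * a + (b - a') / (b - a) * b = a + b - a' := by field_simp; ring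
  simp only [smul_eq_mul, e₁, e₂] at h₁ h₂
  linear_combination h₁ + h₂ - (g a + g b) * hlm

-- `h ↦ f (m + h) - f (m - h)` has an antitone derivative, so it is concave and vanishes at `0`.
lemma slope_le_slope_of_concaveOn_deriv {f f' : ℝ → ℝ} {r s r' s' : ℝ}
    (hf : ContinuousOn f (Icc r s)) (hf' : ∀ x ∈ Ioo r s, HasDerivAt f (f' x) x)
    (hconc : ConcaveOn ℝ (Ioo r s) f') (hr : r ≤ r') (hrs : r' < s') (hsum : r' + s' = r + s) :
    slope f r s ≤ slope f r' s' := by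
  obtain ⟨m, rfl⟩ : ∃ m, s = 2 * m - r := ⟨(r + s) / 2, by ring⟩
  obtain rfl : s' = 2 * m - r' := by linear_combination hsum
  set F : ℝ → ℝ := fun h ↦ f (m + h) - f (m - h)
  have hF' : ∀ h ∈ Ioo 0 (m - r), HasDerivAt F (f' (m + h) + f' (m - h)) h := by
    rintro h ⟨h0, hH⟩
    have := ((hf' (m + h) ⟨by linarith, by linarith⟩).comp_const_add m h).sub
      ((hf' (m - h) ⟨by linarith, by linarith⟩).comp_const_sub m h)
    rwa [sub_neg_eq_add] at this
  have hFconc : ConcaveOn ℝ (Icc 0 (m - r)) F := by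
    refine AntitoneOn.concaveOn_of_deriv (convex_Icc _ _) ?_ ?_ ?_
    · refine (hf.comp (by fun_prop) fun h hh ↦ ?_).sub (hf.comp (by fun_prop) fun h hh ↦ ?_) <;>
        obtain ⟨h0, hH⟩ := hh <;> constructor <;> linarith
    · rw [interior_Icc]
      exact fun h hh ↦ (hF' h hh).differentiableAt.differentiableWithinAt
    · rw [interior_Icc]
      intro h₁ hh₁ h₂ hh₂ h₁₂
      rw [(hF' h₁ hh₁).deriv, (hF' h₂ hh₂).deriv]
      obtain ⟨h₁0, h₁H⟩ := hh₁
      obtain ⟨h₂0, h₂H⟩ := hh₂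
      have := hconc.add_le_add_of_add_eq (a := m - h₂) (b := m + h₂) (a' := m - h₁) (b' := m + h₁)
        ⟨by linarith, by linarith⟩ ⟨by linarith, by linarith⟩ (by linarith) (by linarith) (by ring)
      linarith
  have hslope : slope F 0 (m - r) ≤ slope F 0 (m - r') :=
    hFconc.slope_anti (left_mem_Icc.2 (by linarith))
      ⟨⟨by linarith, by linarith⟩, by simp only [mem_singleton_iff]; linarith⟩
      ⟨⟨by linarith, by linarith⟩, by simp only [mem_singleton_iff]; linarith⟩ (by linarith)
  have e : ∀ t, m + (m - t) = 2 * m - t := fun t ↦ by ring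
  simp only [slope_def_field, F, e, sub_sub_cancel, add_zero, sub_zero, sub_self] at hslope ⊢
  rw [show 2 * m - r - r = (m - r) * 2 by ring, show 2 * m - r' - r' = (m - r') * 2 by ring,
    ← div_div, ← div_div]
  exact div_le_div_of_nonneg_right hslope zero_le_two

-- At `u = 0` the junk value `log (0 / 0) = 0` is also the limit, so `logSinhc` is continuous.
noncomputable def logSinhc (u : ℝ) : ℝ := log (sinh u / u)

noncomputable def langevin (u : ℝ) : ℝ := cosh u / sinh u - u⁻¹

@[fun_prop]
lemma continuous_logSinhc : Continuous logSinhc := by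
  refine continuous_iff_continuousAt.2 fun u ↦ ?_
  rcases eq_or_ne u 0 with rfl | hu
  · rw [← continuousWithinAt_compl_self, ContinuousWithinAt]
    show Filter.Tendsto (fun u ↦ log (sinh u / u)) _ (nhds (log (sinh 0 / 0)))
    have hslope := hasDerivAt_iff_tendsto_slope.1 (hasDerivAt_sinh 0)
    simp only [slope_fun_def_field, sinh_zero, sub_zero, cosh_zero] at hslope
    simpa using hslope.log one_ne_zero
  · exact ((continuous_sinh.continuousAt.div continuousAt_id hu).log
      (sinh_div_self_pos hu).ne')

lemma hasDerivAt_logSinhc {u : ℝ} (hu : u ≠ 0) : HasDerivAt logSinhc (langevin u) u := by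
  have := ((hasDerivAt_sinh u).div (hasDerivAt_id u) hu).log (sinh_div_self_pos hu).ne'
  refine this.congr_deriv ?_
  have := sinh_ne_zero.2 hu
  simp only [langevin, Pi.div_apply, id]
  field_simp

lemma hasDerivAt_langevin {u : ℝ} (hu : u ≠ 0) :
    HasDerivAt langevin ((u ^ 2)⁻¹ - (sinh u ^ 2)⁻¹) u := by
  have hs := sinh_ne_zero.2 hu
  have := ((hasDerivAt_cosh u).div (hasDerivAt_sinh u) hs).sub (hasDerivAt_inv hu)
  refine this.congr_deriv ?_
  field_simp
  linear_combination (-u ^ 2) * cosh_sq_sub_sinh_sq u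

lemma hasDerivAt_inv_sq_sub_inv_sinh_sq {u : ℝ} (hu : u ≠ 0) :
    HasDerivAt (fun u ↦ (u ^ 2)⁻¹ - (sinh u ^ 2)⁻¹) (2 * cosh u / sinh u ^ 3 - 2 / u ^ 3) u := by
  have hs := sinh_ne_zero.2 hu
  have := ((hasDerivAt_pow 2 u).inv (pow_ne_zero 2 hu)).sub
    (((hasDerivAt_sinh u).pow 2).inv (pow_ne_zero 2 hs))
  refine this.congr_deriv ?_
  simp only [Pi.pow_apply]
  field_simp
  ring

lemma convexOn_logSinhc : ConvexOn ℝ (Ici 0) logSinhc := by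
  refine convexOn_of_hasDerivWithinAt2_nonneg (convex_Ici 0) continuous_logSinhc.continuousOn
    (f' := langevin) (f'' := fun u ↦ (u ^ 2)⁻¹ - (sinh u ^ 2)⁻¹) ?_ ?_ ?_ <;>
    simp only [interior_Ici, mem_Ioi]
  · exact fun x hx ↦ (hasDerivAt_logSinhc hx.ne').hasDerivWithinAt
  · exact fun x hx ↦ (hasDerivAt_langevin hx.ne').hasDerivWithinAt
  · intro x hx
    rw [sub_nonneg]
    gcongr
    exact self_le_sinh_iff.2 hx.le

lemma sinh_div_cosh_le_three_mul_langevin {u : ℝ} (hu : 0 < u) :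
    sinh u / cosh u ≤ 3 * langevin u := by
  have hs := sinh_pos_iff.2 hu
  have hc := cosh_pos u
  have key : 3 * langevin u - sinh u / cosh u
      = (u * (2 * cosh u ^ 2 + 1) - 3 * sinh u * cosh u) / (u * sinh u * cosh u) := by
    rw [langevin]
    field_simp
    linear_combination u * cosh_sq_sub_sinh_sq u
  rw [← sub_nonneg, key]
  exact div_nonneg (sub_nonneg.2 (three_mul_sinh_mul_cosh_le hu.le)) (by positivity)

lemma log_cosh_le_three_mul_logSinhc {u : ℝ} (hu : 0 ≤ u) : log (cosh u) ≤ 3 * logSinhc u := by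
  have hmono : MonotoneOn (fun u ↦ 3 * logSinhc u - log (cosh u)) (Ici 0) :=
    monotoneOn_Ici_of_hasDerivAt_nonneg
      (by have := continuous_cosh.log fun x ↦ (cosh_pos x).ne'; fun_prop)
      (fun x hx ↦ ((hasDerivAt_logSinhc hx.ne').const_mul 3).sub
        ((hasDerivAt_cosh x).log (cosh_pos x).ne'))
      (fun x hx ↦ sub_nonneg.2 (sinh_div_cosh_le_three_mul_langevin hx))
  simpa [logSinhc] using hmono self_mem_Ici hu hu

lemma pow_three_mul_cosh_le_sinh_pow_three {u : ℝ} (hu : 0 ≤ u) :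
    u ^ 3 * cosh u ≤ sinh u ^ 3 := by
  rcases hu.eq_or_lt with rfl | hu
  · simp
  have h := log_cosh_le_three_mul_logSinhc hu.le
  rw [logSinhc, show 3 * log (sinh u / u) = log ((sinh u / u) ^ 3) by rw [log_pow]; norm_num,
    log_le_log_iff (cosh_pos u) (pow_pos (sinh_div_self_pos hu.ne') 3), div_pow,
    le_div_iff₀ (by positivity)] at h
  linarith

lemma concaveOn_langevin : ConcaveOn ℝ (Ioi 0) langevin := by
  refine concaveOn_of_hasDerivWithinAt2_nonpos (convex_Ioi 0)
    (f' := fun u ↦ (u ^ 2)⁻¹ - (sinh u ^ 2)⁻¹) (f'' := fun u ↦ 2 * cosh u / sinh u ^ 3 - 2 / u ^ 3)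
    (fun x hx ↦ (hasDerivAt_langevin (ne_of_gt hx)).continuousAt.continuousWithinAt)
    ?_ ?_ ?_ <;> simp only [interior_Ioi, mem_Ioi]
  · exact fun x hx ↦ (hasDerivAt_langevin hx.ne').hasDerivWithinAt
  · exact fun x hx ↦ (hasDerivAt_inv_sq_sub_inv_sinh_sq hx.ne').hasDerivWithinAt
  · intro x hx
    have hs := sinh_pos_iff.2 hx
    rw [sub_nonpos, div_le_div_iff₀ (by positivity) (by positivity)]
    nlinarith [pow_three_mul_cosh_le_sinh_pow_three hx.le]

lemma exp_add_sub_exp_sub (c a : ℝ) : exp (c + a) - exp (c - a) = 2 * exp c * sinh a := by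
  rw [sinh_eq, exp_add, exp_sub, exp_neg]
  field_simp

lemma exp_add_add_exp_sub (c a : ℝ) : exp (c + a) + exp (c - a) = 2 * exp c * cosh a := by
  rw [cosh_eq, exp_add, exp_sub, exp_neg]
  field_simp

lemma sinh_eq_mul_exp_logSinhc {u : ℝ} (hu : u ≠ 0) : sinh u = u * exp (logSinhc u) := by
  rw [logSinhc, exp_log (sinh_div_self_pos hu)]
  field_simp

lemma logSinhc_two_mul {u : ℝ} (hu : u ≠ 0) : logSinhc (2 * u) = logSinhc u + log (cosh u) := by
  rw [logSinhc, logSinhc, sinh_two_mul, ← log_mul (sinh_div_self_pos hu).ne' (cosh_pos u).ne']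
  congr 1
  field_simp

lemma powerMean_exp_add_exp_sub {p : ℝ} (hp : p ≠ 0) (c a : ℝ) :
    powerMean p (exp (c + a)) (exp (c - a)) = exp (c + log (cosh (a * p)) / p) := by
  rw [powerMean, ← exp_mul, ← exp_mul, add_mul, sub_mul, exp_add_add_exp_sub,
    show 2 * exp (c * p) * cosh (a * p) / 2 = exp (c * p + log (cosh (a * p))) by
      rw [exp_add, exp_log (cosh_pos _)]; ring,
    ← exp_mul]
  congr 1
  field_simp

lemma stolarskyMean_exp_add_exp_sub {q : ℝ} (hq : q ≠ 1) (c : ℝ) {a : ℝ} (ha : a ≠ 0) :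
    stolarskyMean q (exp (c + a)) (exp (c - a))
      = exp (c + (logSinhc a - logSinhc (a * q)) / (1 - q)) := by
  have hxy : exp (c + a) ≠ exp (c - a) := by
    rw [Ne, exp_eq_exp]
    contrapose! ha
    linarith
  rw [stolarskyMean, if_neg hxy, exp_add_sub_exp_sub, sinh_eq_mul_exp_logSinhc ha]
  split_ifs with hq₀
  · subst hq₀
    rw [log_exp, log_exp, show c + a - (c - a) = 2 * a by ring]
    simp only [mul_zero, logSinhc, div_zero, log_zero, sub_zero, div_one, exp_add]
    field_simp
  · have hq₁ : q - 1 ≠ 0 := sub_ne_zero.2 hq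
    set t := c + (logSinhc a - logSinhc (a * q)) / (1 - q)
    have ht : t * (q - 1) = c * q - c + logSinhc (a * q) - logSinhc a := by
      simp only [t]
      field_simp
      ring
    rw [← exp_mul, ← exp_mul, add_mul, sub_mul, exp_add_sub_exp_sub,
      sinh_eq_mul_exp_logSinhc (mul_ne_zero ha hq₀),
      show 2 * exp (c * q) * (a * q * exp (logSinhc (a * q))) /
          (q * (2 * exp c * (a * exp (logSinhc a)))) = exp (t * (q - 1)) by
        rw [ht, exp_sub, exp_add, exp_sub]
        field_simp,
      ← exp_mul, mul_assoc, mul_one_div_cancel hq₁, mul_one]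

lemma powerMean_comm (p x y : ℝ) : powerMean p x y = powerMean p y x := by
  rw [powerMean, powerMean, add_comm]

lemma stolarskyMean_comm (q x y : ℝ) : stolarskyMean q x y = stolarskyMean q y x := by
  unfold stolarskyMean
  by_cases h : x = y
  · subst h; rfl
  rw [if_neg h, if_neg (Ne.symm h)]
  split_ifs
  · rw [← neg_div_neg_eq, neg_sub, neg_sub]
  · rw [← neg_div_neg_eq (x ^ q - y ^ q), neg_sub, ← mul_neg, neg_sub]

lemma powerMean_self {p x : ℝ} (hp : p ≠ 0) (hx : 0 ≤ x) : powerMean p x x = x := by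
  rw [powerMean, add_self_div_two, ← rpow_mul hx, mul_one_div_cancel hp, rpow_one]

lemma logSinhc_sub_div_le {p q a : ℝ} (hq0 : 0 ≤ q) (hq1 : q < 1) (hpq : q ≤ p)
    (hp : 1 + q ≤ 3 * p) (ha : 0 < a) :
    (logSinhc a - logSinhc (a * q)) / (1 - q) ≤ log (cosh (a * p)) / p := by
  have hp0 : 0 < p := by linarith
  have hconvex : slope logSinhc (a * q) a ≤ slope logSinhc (a * q) (a * (3 * p - q)) :=
    convexOn_logSinhc.slope_mono (by positivity : 0 ≤ a * q)
      ⟨(by positivity : 0 ≤ a), by simp only [mem_singleton_iff]; nlinarith⟩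
      ⟨(by nlinarith : 0 ≤ a * (3 * p - q)), by simp only [mem_singleton_iff]; nlinarith⟩
      (by nlinarith)
  have hpos : ∀ x ∈ Ioo (a * q) (a * (3 * p - q)), 0 < x :=
    fun x hx ↦ (mul_nonneg ha.le hq0).trans_lt hx.1
  have hconcave :
      slope logSinhc (a * q) (a * (3 * p - q)) ≤ slope logSinhc (a * p) (2 * (a * p)) :=
    slope_le_slope_of_concaveOn_deriv continuous_logSinhc.continuousOn
      (fun x hx ↦ hasDerivAt_logSinhc (hpos x hx).ne')
      (concaveOn_langevin.subset hpos (convex_Ioo _ _)) (by nlinarith) (by nlinarith) (by ring)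
  have hlhs : (logSinhc a - logSinhc (a * q)) / (1 - q) = a * slope logSinhc (a * q) a := by
    rw [slope_def_field]
    field_simp
  have hrhs : log (cosh (a * p)) / p = a * slope logSinhc (a * p) (2 * (a * p)) := by
    rw [slope_def_field, logSinhc_two_mul (by positivity)]
    field_simp
    ring
  rw [hlhs, hrhs]
  exact mul_le_mul_of_nonneg_left (hconvex.trans hconcave) ha.le

/-- For `0 ≤ q < 1` and `p ≥ max{q, (1+q)/3}`, `A_p(x,y) ≥ St_q(x,y)`
for all `x, y > 0`. -/
theorem stmt_12 (p q : ℝ) (hq0 : 0 ≤ q) (hq1 : q < 1)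
    (hp : max q ((1 + q) / 3) ≤ p) :
    ∀ x y : ℝ, 0 < x → 0 < y → stolarskyMean q x y ≤ powerMean p x y := by
  obtain ⟨hpq, hp3⟩ := max_le_iff.1 hp
  have hp0 : 0 < p := by linarith
  have hlt : ∀ x y : ℝ, 0 < y → y < x → stolarskyMean q x y ≤ powerMean p x y := by
    intro x y hy hyx
    obtain ⟨c, a, ha, rfl, rfl⟩ : ∃ c a, 0 < a ∧ x = exp (c + a) ∧ y = exp (c - a) :=
      ⟨(log x + log y) / 2, (log x - log y) / 2, by linarith [log_lt_log hy hyx],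
        by rw [← add_div, add_add_sub_cancel, add_self_div_two, exp_log (hy.trans hyx)],
        by rw [← sub_div, add_sub_sub_cancel, add_self_div_two, exp_log hy]⟩
    rw [stolarskyMean_exp_add_exp_sub hq1.ne c ha.ne', powerMean_exp_add_exp_sub hp0.ne',
      exp_le_exp, add_le_add_iff_left]
    exact logSinhc_sub_div_le hq0 hq1 hpq (by linarith) ha
  intro x y hx hy
  rcases lt_trichotomy y x with hyx | rfl | hxy
  · exact hlt x y hy hyx
  · rw [stolarskyMean, if_pos rfl, powerMean_self hp0.ne' hx.le]
  · rw [stolarskyMean_comm, powerMean_comm]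
    exact hlt y x hx hxy
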